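/- Let r be an n-dimensional weight and x ∈ ℝ^n. Suppose there exists c > 0 such that for all t > 0 and all nonzero integer vectors p = (p_1,...,p_n,q) ∈ ℤ^{n+1}, the sup-norm of a_r(t)V(x)p is at least c. Then there exists c' > 0 such that for all integer vectors (p_1,...,p_n,q) with q ≠ 0, max_{1≤i≤n} |q|^{r_i} |q x_i + p_i| ≥ c', i.e., x is r-badly approximable. -/

import Mathlib

/-- The diagonal flow `a_r(t) = diag(e^{r₁ t}, ..., e^{rₙ t}, e^{-t})`. -/
noncomputable def arMat (n : ℕ) (r : Fin n → ℝ) (t : ℝ) :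
    Matrix (Fin (n + 1)) (Fin (n + 1)) ℝ :=
  Matrix.diagonal fun i =>
    if h : (i : ℕ) < n then Real.exp (r ⟨i, h⟩ * t) else Real.exp (-t)

/-- The unipotent matrix `V(x) = [[Iₙ, x], [0, 1]]`. -/
def VMat (n : ℕ) (x : Fin n → ℝ) : Matrix (Fin (n + 1)) (Fin (n + 1)) ℝ :=
  Matrix.of fun i j =>
    if i = j then 1
    else if h : (i : ℕ) < n ∧ (j : ℕ) = n then x ⟨i, h.1⟩ else 0

/-!
Given `q ≠ 0`, flow for the time `t` with `e^t = 2|q|/c`. The last coordinate of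
`a_r(t) V(x) (p, q)` is then `c/2 < c`, so some coordinate `e^{r_i t} |q x_i + p_i|` is at
least `c`, and `|q|^{r_i} = e^{r_i t} (c/2)^{r_i}` turns this into
`|q|^{r_i} |q x_i + p_i| ≥ c (c/2)^{r_i}`. Shrinking `c` to `min c 1` makes `t` positive.
-/

open Matrix

lemma VMat_mulVec_castSucc {n : ℕ} (x : Fin n → ℝ) (w : Fin (n + 1) → ℝ) (i : Fin n) :
    (VMat n x *ᵥ w) i.castSucc = w i.castSucc + x i * w (Fin.last n) := by
  have hlt (j : Fin n) : (j : ℕ) ≠ n := j.isLt.ne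
  simp [VMat, mulVec, dotProduct, Fin.sum_univ_castSucc, Fin.castSucc_ne_last, hlt]

lemma VMat_mulVec_last {n : ℕ} (x : Fin n → ℝ) (w : Fin (n + 1) → ℝ) :
    (VMat n x *ᵥ w) (Fin.last n) = w (Fin.last n) := by
  simp [VMat, mulVec, dotProduct]

lemma arMat_mulVec_castSucc {n : ℕ} (r : Fin n → ℝ) (t : ℝ) (w : Fin (n + 1) → ℝ) (i : Fin n) :
    (arMat n r t *ᵥ w) i.castSucc = Real.exp (r i * t) * w i.castSucc := by
  simp [arMat, mulVec_diagonal]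

lemma arMat_mulVec_last {n : ℕ} (r : Fin n → ℝ) (t : ℝ) (w : Fin (n + 1) → ℝ) :
    (arMat n r t *ᵥ w) (Fin.last n) = Real.exp (-t) * w (Fin.last n) := by
  simp [arMat, mulVec_diagonal]

lemma arMat_mul_VMat_mulVec_castSucc {n : ℕ} (r : Fin n → ℝ) (t : ℝ) (x : Fin n → ℝ)
    (w : Fin (n + 1) → ℝ) (i : Fin n) :
    ((arMat n r t * VMat n x) *ᵥ w) i.castSucc =
      Real.exp (r i * t) * (w i.castSucc + x i * w (Fin.last n)) := by
  rw [← mulVec_mulVec, arMat_mulVec_castSucc, VMat_mulVec_castSucc]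

lemma arMat_mul_VMat_mulVec_last {n : ℕ} (r : Fin n → ℝ) (t : ℝ) (x : Fin n → ℝ)
    (w : Fin (n + 1) → ℝ) :
    ((arMat n r t * VMat n x) *ᵥ w) (Fin.last n) = Real.exp (-t) * w (Fin.last n) := by
  rw [← mulVec_mulVec, arMat_mulVec_last, VMat_mulVec_last]

lemma exists_le_abs_castSucc_of_le_norm {n : ℕ} {w : Fin (n + 1) → ℝ} {c : ℝ}
    (hw : c ≤ ‖w‖) (hlast : |w (Fin.last n)| < c) : ∃ i : Fin n, c ≤ |w i.castSucc| := by
  by_contra! h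
  have hc : 0 < c := (abs_nonneg _).trans_lt hlast
  refine hw.not_gt ((pi_norm_lt_iff hc).2 (Fin.lastCases ?_ fun i => ?_))
  · simpa using hlast
  · simpa using h i

lemma exists_pos_forall_le_of_pos {ι : Type*} [Finite ι] (f : ι → ℝ) (hf : ∀ i, 0 < f i) :
    ∃ m > 0, ∀ i, m ≤ f i := by
  cases isEmpty_or_nonempty ι
  · exact ⟨1, one_pos, fun i => isEmptyElim i⟩
  · obtain ⟨i₀, hi₀⟩ := Finite.exists_min f
    exact ⟨f i₀, hf i₀, hi₀⟩

theorem exists_le_rpow_mul_abs_of_forall_le_norm {n : ℕ} {r : Fin n → ℝ} {x : Fin n → ℝ}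
    {c : ℝ} (hc : 0 < c) (hc2 : c < 2)
    (horb : ∀ t > (0 : ℝ), ∀ v : Fin (n + 1) → ℤ, v ≠ 0 →
      c ≤ ‖(arMat n r t * VMat n x) *ᵥ fun i => (v i : ℝ)‖)
    (p : Fin n → ℤ) {q : ℤ} (hq : q ≠ 0) :
    ∃ i, c * (c / 2) ^ r i ≤ |(q : ℝ)| ^ r i * |q * x i + p i| := by
  set s := 2 * |(q : ℝ)| / c
  have hs : 1 < s := by
    have : 1 ≤ |(q : ℝ)| := by exact_mod_cast Int.one_le_abs hq
    rw [lt_div_iff₀ hc]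
    linarith
  set t := Real.log s
  have hexp : Real.exp t = s := Real.exp_log (by linarith)
  set v : Fin (n + 1) → ℤ := Fin.snoc p q
  have hv : v ≠ 0 := fun h => hq (by simpa [v] using congrFun h (Fin.last n))
  set w : Fin (n + 1) → ℝ := (arMat n r t * VMat n x) *ᵥ fun i => (v i : ℝ)
  have hlast : |w (Fin.last n)| = c / 2 := by
    simp only [w, arMat_mul_VMat_mulVec_last, Real.exp_neg, hexp, v, Fin.snoc_last, abs_mul, s,
      inv_div, abs_div, abs_abs, abs_two, abs_of_pos hc]
    field_simp
  obtain ⟨i, hi⟩ := exists_le_abs_castSucc_of_le_norm (horb t (Real.log_pos hs) v hv)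
    (by rw [hlast]; linarith)
  have hw : |w i.castSucc| = Real.exp (r i * t) * |q * x i + p i| := by
    simp [w, v, arMat_mul_VMat_mulVec_castSucc, abs_mul, add_comm, mul_comm]
  have hq_rpow : |(q : ℝ)| ^ r i = Real.exp (r i * t) * (c / 2) ^ r i := by
    rw [mul_comm (r i), Real.exp_mul, hexp, ← Real.mul_rpow (by positivity) (by positivity)]
    congr 1
    simp only [s]
    field_simp
  refine ⟨i, ?_⟩
  calc c * (c / 2) ^ r i ≤ |w i.castSucc| * (c / 2) ^ r i := by gcongr
    _ = _ := by rw [hw, hq_rpow]; ring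

theorem stmt_4_general (n : ℕ) (r : Fin n → ℝ) (x : Fin n → ℝ)
    (c : ℝ) (hc : 0 < c)
    (horb : ∀ t > (0 : ℝ), ∀ v : Fin (n + 1) → ℤ, v ≠ 0 →
      c ≤ ‖(arMat n r t * VMat n x).mulVec fun i => (v i : ℝ)‖) :
    ∃ c' > (0 : ℝ), ∀ (p : Fin n → ℤ) (q : ℤ), q ≠ 0 →
      ∃ i, c' ≤ |(q : ℝ)| ^ (r i) * |(q : ℝ) * x i + (p i : ℝ)| := by
  set c₀ := min c 1
  have hc₀ : 0 < c₀ := lt_min hc one_pos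
  obtain ⟨m, hm, hm_le⟩ := exists_pos_forall_le_of_pos (fun i => (c₀ / 2) ^ r i)
    fun i => by positivity
  refine ⟨c₀ * m, by positivity, fun p q hq => ?_⟩
  obtain ⟨i, hi⟩ := exists_le_rpow_mul_abs_of_forall_le_norm hc₀
    ((min_le_right _ _).trans_lt one_lt_two)
    (fun t ht v hv => (min_le_left _ _).trans (horb t ht v hv)) p hq
  exact ⟨i, le_trans (by gcongr; exact hm_le i) hi⟩

/-- If there is `c > 0` such that for all `t > 0` all nonzero vectors of
`a_r(t) V(x) ℤ^{n+1}` have sup-norm at least `c`, then `x` is `r`-badly approximable. -/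
theorem stmt_4 (n : ℕ) (hn : 1 ≤ n) (r : Fin n → ℝ)
    (hr : ∀ i, 0 ≤ r i) (hsum : ∑ i, r i = 1) (x : Fin n → ℝ)
    (c : ℝ) (hc : 0 < c)
    (horb : ∀ t > (0 : ℝ), ∀ v : Fin (n + 1) → ℤ, v ≠ 0 →
      c ≤ ‖(arMat n r t * VMat n x).mulVec fun i => (v i : ℝ)‖) :
    ∃ c' > (0 : ℝ), ∀ (p : Fin n → ℤ) (q : ℤ), q ≠ 0 →
      ∃ i, c' ≤ |(q : ℝ)| ^ (r i) * |(q : ℝ) * x i + (p i : ℝ)| :=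
  stmt_4_general n r x c hc horb
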